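/- For a depth-L neural network with differentiable activation, the minimum eigenvalue of the empirical NTK satisfies λ_min(J J^T) ≥ Σ_{k=0}^{L−1} λ_min(F_k F_k^T) · min_{i∈[N]} ‖(G_{k+1})_{i:}‖₂². -/

import Mathlib

open MeasureTheory ProbabilityTheory Finset NNReal
open scoped Classical

noncomputable section

/-- squared Euclidean norm of a vector -/
def sqNorm {m : ℕ} (v : Fin m → ℝ) : ℝ := ∑ i, v i ^ 2

/-- view a plain vector as an element of Euclidean space (same underlying type) -/
def toEuc {m : ℕ} (v : Fin m → ℝ) : EuclideanSpace ℝ (Fin m) := WithLp.toLp 2 v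

/-- feature maps of the network: `W j` is the paper's `W_{j+1} ∈ ℝ^{n_j × n_{j+1}}`,
`feat φ n W k x = f_k(x)` (activation `φ` applied at every hidden layer, `f_0 = id`). -/
def feat (φ : ℝ → ℝ) (n : ℕ → ℕ) (W : ∀ j : ℕ, Fin (n j) → Fin (n (j+1)) → ℝ) :
    (k : ℕ) → (Fin (n 0) → ℝ) → Fin (n k) → ℝ
  | 0, x => x
  | (k+1), x => fun j => φ (∑ i, W k i j * feat φ n W k x i)

/-- the cosine activation x ↦ cos (s x) -/
def cosAct (s : ℝ) : ℝ → ℝ := fun t => Real.cos (s * t)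

/-- pre-activations of layer k+1 (the paper's g_{k+1,j}(x)) -/
def preact (φ : ℝ → ℝ) (n : ℕ → ℕ) (W : ∀ j : ℕ, Fin (n j) → Fin (n (j+1)) → ℝ)
    (k : ℕ) (x : Fin (n 0) → ℝ) (j : Fin (n (k+1))) : ℝ :=
  ∑ i, W k i j * feat φ n W k x i

/-- diagonal entries of the paper's Σ_{k+1}(x) : φ'(g_{k+1,j}(x)) -/
def actD (φ : ℝ → ℝ) (n : ℕ → ℕ) (W : ∀ j : ℕ, Fin (n j) → Fin (n (j+1)) → ℝ)
    (k : ℕ) (x : Fin (n 0) → ℝ) (j : Fin (n (k+1))) : ℝ :=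
  deriv φ (preact φ n W k x j)

/-- extend a finite family of weight matrices (layers 0,…,L-1) by zero -/
def extendW (L : ℕ) (n : ℕ → ℕ) (ω : ∀ j : Fin L, Fin (n j) → Fin (n (j+1)) → ℝ) :
    ∀ j : ℕ, Fin (n j) → Fin (n (j+1)) → ℝ :=
  fun j => if h : j < L then ω ⟨j, h⟩ else 0

/-- i.i.d. Gaussian initialization: entries of `W j` (the paper's W_{j+1}) are N(0, β_{j+1}²) -/
def weightMeasure (L : ℕ) (n : ℕ → ℕ) (β : ℕ → ℝ≥0) :
    Measure (∀ j : Fin L, Fin (n j) → Fin (n (j+1)) → ℝ) :=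
  Measure.pi fun j => Measure.pi fun _ => Measure.pi fun _ => gaussianReal 0 (β ((j:ℕ)+1) ^ 2)

/-- min_{l ∈ [0,k]} n_l -/
def minWidth (n : ℕ → ℕ) (k : ℕ) : ℕ :=
  (Finset.range (k+1)).inf' ⟨0, Finset.mem_range.mpr (Nat.succ_pos k)⟩ n

/-- the matrix Σ_{a+1}(x) ∏_{l=a+2}^{a+1+m} W_l Σ_l(x) (paper indices) -/
def backChain (φ : ℝ → ℝ) (n : ℕ → ℕ) (W : ∀ j : ℕ, Fin (n j) → Fin (n (j+1)) → ℝ)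
    (a : ℕ) (x : Fin (n 0) → ℝ) :
    (m : ℕ) → Fin (n (a+1)) → Fin (n (a+1+m)) → ℝ
  | 0 => fun i j => if i = j then actD φ n W a x i else 0
  | (m+1) => fun i j =>
      ∑ l, backChain φ n W a x m i l * (W (a+1+m) l j * actD φ n W (a+1+m) x j)

/-- the vector Σ_{a+1}(x) (∏_{l=a+2}^{a+1+m} W_l Σ_l(x)) W_{a+2+m}, summed over the
final output coordinates (of which there is exactly one when n_{a+2+m} = 1) -/
def gVec (φ : ℝ → ℝ) (n : ℕ → ℕ) (W : ∀ j : ℕ, Fin (n j) → Fin (n (j+1)) → ℝ)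
    (a m : ℕ) (x : Fin (n 0) → ℝ) : Fin (n (a+1)) → ℝ :=
  fun i => ∑ l, ∑ r, backChain φ n W a x m i l * W (a+1+m) l r

/-- network output f_L(x) (summed over the output coordinates; the output layer is
linear), with L = Lm1 + 1 -/
def outScalar (φ : ℝ → ℝ) (n : ℕ → ℕ) (Lm1 : ℕ)
    (W : ∀ j : ℕ, Fin (n j) → Fin (n (j+1)) → ℝ) (x : Fin (n 0) → ℝ) : ℝ :=
  ∑ r : Fin (n (Lm1+1)), ∑ i, W Lm1 i r * feat φ n W Lm1 x i

/-- partial derivative of the network output with respect to the entry (a,b) of the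
j-th weight matrix, at the weight configuration ω -/
def pDeriv (φ : ℝ → ℝ) (n : ℕ → ℕ) (Lm1 : ℕ)
    (ω : ∀ j : Fin (Lm1+1), Fin (n j) → Fin (n (j+1)) → ℝ)
    (j : Fin (Lm1+1)) (a : Fin (n j)) (b : Fin (n (j+1))) (x : Fin (n 0) → ℝ) : ℝ :=
  deriv (fun t : ℝ => outScalar φ n Lm1
    (extendW (Lm1+1) n (Function.update ω j
      (Function.update (ω j) a (Function.update (ω j a) b t)))) x) (ω j a b)

/-- the empirical NTK matrix K_L = J Jᵀ -/
def ntkMat (φ : ℝ → ℝ) (n : ℕ → ℕ) (Lm1 : ℕ)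
    (ω : ∀ j : Fin (Lm1+1), Fin (n j) → Fin (n (j+1)) → ℝ)
    {N : ℕ} (X : Fin N → (Fin (n 0) → ℝ)) : Fin N → Fin N → ℝ :=
  fun i i' => ∑ j : Fin (Lm1+1), ∑ a, ∑ b,
    pDeriv φ n Lm1 ω j a b (X i) * pDeriv φ n Lm1 ω j a b (X i')

/-- the Gram matrix F_k F_kᵀ of the layer-k features -/
def featGram (φ : ℝ → ℝ) (n : ℕ → ℕ) (W : ∀ j : ℕ, Fin (n j) → Fin (n (j+1)) → ℝ)
    (k : ℕ) {N : ℕ} (X : Fin N → (Fin (n 0) → ℝ)) : Fin N → Fin N → ℝ :=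
  fun i i' => ∑ j, feat φ n W k (X i) j * feat φ n W k (X i') j

/-- entries of G_{a+1} G_{a+1}ᵀ : for a < Lm1 the i-th row of G_{a+1} is
Σ_{a+1}(x_i) (∏_{l=a+2}^{L-1} W_l Σ_l(x_i)) W_L, and for a = Lm1 (i.e. G_L) each row is
the constant vector 1_N/√N -/
def gGram (φ : ℝ → ℝ) (n : ℕ → ℕ) (W : ∀ j : ℕ, Fin (n j) → Fin (n (j+1)) → ℝ)
    (Lm1 : ℕ) {N : ℕ} (X : Fin N → (Fin (n 0) → ℝ)) (a : ℕ) (i i' : Fin N) : ℝ :=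
  if a < Lm1 then
    ∑ j : Fin (n (a+1)),
      gVec φ n W a (Lm1-(a+1)) (X i) j * gVec φ n W a (Lm1-(a+1)) (X i') j
  else ∑ _r : Fin (n (Lm1+1)), (1/Real.sqrt N) * (1/Real.sqrt N)

/-- the minimum eigenvalue of a symmetric matrix, via the Rayleigh quotient -/
def lamMin {N : ℕ} (K : Fin N → Fin N → ℝ) : ℝ :=
  ⨅ v : {v : Fin N → ℝ // ∑ i, v i ^ 2 = 1}, ∑ i, ∑ j, v.1 i * K i j * v.1 j


/-!
Split the NTK by layers, `J Jᵀ = Σ_j J_j J_jᵀ`. By backpropagation the derivative of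
the output in the entry `(a, b)` of the `j`-th weight matrix is `f_j(x)_a · (G_{j+1}(x))_b`,
so `J_j J_jᵀ = F_j F_jᵀ ∘ G_{j+1} G_{j+1}ᵀ` for the hidden layers, and `J_j J_jᵀ = F_j F_jᵀ`
for the output layer (where `n_L = 1`; the diagonal `1/N` of `G_L G_Lᵀ` is at most `1`).
On a unit vector `v` each Hadamard term is bounded as in Schur's theorem:
`vᵀ (A ∘ G Gᵀ) v = Σ_q (v ∘ G_q)ᵀ A (v ∘ G_q) ≥ λ_min(A) Σ_i v_i² ‖G_i‖²`
`≥ λ_min(A) min_i ‖G_i‖²`.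
-/
def quadForm {N : ℕ} (K : Fin N → Fin N → ℝ) (v : Fin N → ℝ) : ℝ :=
  ∑ i, ∑ j, v i * K i j * v j

section QuadForm

variable {N : ℕ}

lemma quadForm_smul (K : Fin N → Fin N → ℝ) (c : ℝ) (v : Fin N → ℝ) :
    quadForm K (c • v) = c ^ 2 * quadForm K v := by
  simp only [quadForm, Pi.smul_apply, smul_eq_mul, mul_sum]
  exact Finset.sum_congr rfl fun i _ => Finset.sum_congr rfl fun j _ => by ring

lemma quadForm_sum {ι : Type*} (s : Finset ι) (K : ι → Fin N → Fin N → ℝ)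
    (v : Fin N → ℝ) :
    quadForm (fun i j => ∑ k ∈ s, K k i j) v = ∑ k ∈ s, quadForm (K k) v := by
  simp only [quadForm, mul_sum, sum_mul]
  exact Finset.sum_comm_cycle

lemma quadForm_gram {ι : Type*} [Fintype ι] (u : Fin N → ι → ℝ) (v : Fin N → ℝ) :
    quadForm (fun i j => ∑ p, u i p * u j p) v = ∑ p, (∑ i, v i * u i p) ^ 2 := by
  simp only [quadForm, sq, mul_sum, sum_mul]
  rw [Finset.sum_comm_cycle]
  exact Finset.sum_congr rfl fun p _ => Finset.sum_congr rfl fun i _ =>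
    Finset.sum_congr rfl fun j _ => by ring

lemma quadForm_gram_nonneg {ι : Type*} [Fintype ι] (u : Fin N → ι → ℝ)
    (v : Fin N → ℝ) :
    0 ≤ quadForm (fun i j => ∑ p, u i p * u j p) v := by
  rw [quadForm_gram]
  positivity

lemma quadForm_hadamard_gram {ι : Type*} [Fintype ι] (A : Fin N → Fin N → ℝ)
    (g : Fin N → ι → ℝ) (v : Fin N → ℝ) :
    quadForm (fun i j => A i j * ∑ q, g i q * g j q) v
      = ∑ q, quadForm A (fun i => v i * g i q) := by
  simp only [quadForm, mul_sum, sum_mul]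
  rw [Finset.sum_comm_cycle]
  exact Finset.sum_congr rfl fun q _ => Finset.sum_congr rfl fun i _ =>
    Finset.sum_congr rfl fun j _ => by ring

variable {K : Fin N → Fin N → ℝ}

lemma lamMin_nonneg (hK : ∀ w, 0 ≤ quadForm K w) : 0 ≤ lamMin K :=
  Real.iInf_nonneg fun v => hK v.1

lemma lamMin_le_quadForm (hK : ∀ w, 0 ≤ quadForm K w) {u : Fin N → ℝ}
    (hu : ∑ i, u i ^ 2 = 1) : lamMin K ≤ quadForm K u :=
  ciInf_le ⟨0, by rintro _ ⟨w, rfl⟩; exact hK w.1⟩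
    (⟨u, hu⟩ : {v : Fin N → ℝ // ∑ i, v i ^ 2 = 1})

lemma lamMin_mul_sum_sq_le (hK : ∀ w, 0 ≤ quadForm K w) (w : Fin N → ℝ) :
    lamMin K * ∑ i, w i ^ 2 ≤ quadForm K w := by
  set s := ∑ i, w i ^ 2
  rcases (show 0 ≤ s by positivity).eq_or_lt with hs | hs
  · rw [← hs, mul_zero]
    exact hK w
  have hsqrt : (Real.sqrt s)⁻¹ ^ 2 = s⁻¹ := by rw [inv_pow, Real.sq_sqrt hs.le]
  have hunit : ∑ i, ((Real.sqrt s)⁻¹ • w) i ^ 2 = 1 := by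
    simp only [Pi.smul_apply, smul_eq_mul, mul_pow, ← mul_sum, hsqrt]
    exact inv_mul_cancel₀ hs.ne'
  have h := lamMin_le_quadForm hK hunit
  rwa [quadForm_smul, hsqrt, inv_mul_eq_div, le_div_iff₀ hs] at h

lemma le_lamMin (hN : 0 < N) {c : ℝ}
    (h : ∀ v : Fin N → ℝ, ∑ i, v i ^ 2 = 1 → c ≤ quadForm K v) : c ≤ lamMin K :=
  have : Nonempty {v : Fin N → ℝ // ∑ i, v i ^ 2 = 1} :=
    ⟨⟨Pi.single ⟨0, hN⟩ 1, by simp [Pi.single_apply]⟩⟩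
  le_ciInf fun v => h v.1 v.2

lemma lamMin_mul_iInf_le_quadForm_hadamard {ι : Type*} [Fintype ι]
    (hK : ∀ w, 0 ≤ quadForm K w) (g : Fin N → ι → ℝ) {v : Fin N → ℝ}
    (hv : ∑ i, v i ^ 2 = 1) :
    lamMin K * ⨅ i, ∑ q, g i q * g i q
      ≤ quadForm (fun i j => K i j * ∑ q, g i q * g j q) v := by
  have hmin : ⨅ i, ∑ q, g i q * g i q ≤ ∑ i, v i ^ 2 * ∑ q, g i q * g i q :=
    calc ⨅ i, ∑ q, g i q * g i q = ∑ i, v i ^ 2 * ⨅ i, ∑ q, g i q * g i q := by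
          rw [← sum_mul, hv, one_mul]
      _ ≤ ∑ i, v i ^ 2 * ∑ q, g i q * g i q :=
          sum_le_sum fun i _ => mul_le_mul_of_nonneg_left
            (ciInf_le (Set.finite_range _).bddBelow i) (sq_nonneg _)
  calc lamMin K * ⨅ i, ∑ q, g i q * g i q
      ≤ lamMin K * ∑ i, v i ^ 2 * ∑ q, g i q * g i q :=
        mul_le_mul_of_nonneg_left hmin (lamMin_nonneg hK)
    _ = ∑ q, lamMin K * ∑ i, (v i * g i q) ^ 2 := by
        simp only [mul_sum, sq]
        rw [Finset.sum_comm]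
        exact Finset.sum_congr rfl fun i _ => Finset.sum_congr rfl fun q _ => by ring
    _ ≤ ∑ q, quadForm K (fun i => v i * g i q) :=
        sum_le_sum fun q _ => lamMin_mul_sum_sq_le hK _
    _ = quadForm (fun i j => K i j * ∑ q, g i q * g j q) v :=
        (quadForm_hadamard_gram K g v).symm

end QuadForm

section Perturb

variable {n : ℕ → ℕ}

def perturb (W : ∀ j : ℕ, Fin (n j) → Fin (n (j+1)) → ℝ) (j : ℕ) (a : Fin (n j))
    (b : Fin (n (j+1))) (t : ℝ) : ∀ j : ℕ, Fin (n j) → Fin (n (j+1)) → ℝ :=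
  Function.update W j (Function.update (W j) a (Function.update (W j a) b t))

variable (W : ∀ j : ℕ, Fin (n j) → Fin (n (j+1)) → ℝ) (j : ℕ) (a : Fin (n j))
  (b : Fin (n (j+1)))

lemma perturb_of_ne (t : ℝ) {k : ℕ} (hk : k ≠ j) : perturb W j a b t k = W k :=
  Function.update_of_ne hk _ _

lemma perturb_apply_self (t : ℝ) (i : Fin (n j)) (c : Fin (n (j+1))) :
    perturb W j a b t j i c = if i = a ∧ c = b then t else W j i c := by
  by_cases hi : i = a
  · subst hi
    by_cases hc : c = b
    · subst hc; simp [perturb]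
    · simp [perturb, hc]
  · simp [perturb, hi]

@[simp]
lemma perturb_self : perturb W j a b (W j a b) = W := by
  simp [perturb]

lemma hasDerivAt_perturb_apply_self (t : ℝ) (i : Fin (n j)) (c : Fin (n (j+1))) :
    HasDerivAt (fun s => perturb W j a b s j i c) (if i = a ∧ c = b then 1 else 0) t := by
  simp only [perturb_apply_self]
  split_ifs
  · exact hasDerivAt_id t
  · exact hasDerivAt_const t _

lemma hasDerivAt_sum_perturb_mul (f : Fin (n j) → ℝ) (t : ℝ) (c : Fin (n (j+1))) :
    HasDerivAt (fun s => ∑ i, perturb W j a b s j i c * f i)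
      (if c = b then f a else 0) t := by
  refine (HasDerivAt.fun_sum fun i _ =>
    (hasDerivAt_perturb_apply_self W j a b t i c).mul_const (f i)).congr_deriv ?_
  by_cases hc : c = b <;> simp [hc]

end Perturb

@[simp]
lemma extendW_apply (L : ℕ) (n : ℕ → ℕ) (ω : ∀ j : Fin L, Fin (n j) → Fin (n (j+1)) → ℝ)
    (j : Fin L) : extendW L n ω j = ω j := by
  simp [extendW]

lemma extendW_update (L : ℕ) (n : ℕ → ℕ) (ω : ∀ j : Fin L, Fin (n j) → Fin (n (j+1)) → ℝ)
    (j : Fin L) (a : Fin (n j)) (b : Fin (n (j+1))) (t : ℝ) :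
    extendW L n (Function.update ω j (Function.update (ω j) a (Function.update (ω j a) b t)))
      = perturb (extendW L n ω) j a b t := by
  obtain ⟨j, hj⟩ := j
  funext k
  by_cases hk : k = j
  · subst hk
    simp [extendW, perturb, hj]
  · simp [extendW, perturb_of_ne _ _ _ _ _ hk, Fin.ext_iff, hk]

lemma pDeriv_eq_deriv_perturb (φ : ℝ → ℝ) (n : ℕ → ℕ) (Lm1 : ℕ)
    (ω : ∀ j : Fin (Lm1+1), Fin (n j) → Fin (n (j+1)) → ℝ)
    (j : Fin (Lm1+1)) (a : Fin (n j)) (b : Fin (n (j+1))) (x : Fin (n 0) → ℝ) :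
    pDeriv φ n Lm1 ω j a b x
      = deriv (fun t => outScalar φ n Lm1 (perturb (extendW (Lm1+1) n ω) j a b t) x)
          (ω j a b) := by
  simp only [pDeriv, extendW_update]

section FeatureDerivative

variable {φ : ℝ → ℝ} {n : ℕ → ℕ}

lemma feat_succ_apply (W : ∀ j : ℕ, Fin (n j) → Fin (n (j+1)) → ℝ) (k : ℕ)
    (x : Fin (n 0) → ℝ) (c : Fin (n (k+1))) :
    feat φ n W (k+1) x c = φ (preact φ n W k x c) := rfl

lemma feat_congr {W W' : ∀ j : ℕ, Fin (n j) → Fin (n (j+1)) → ℝ} {k : ℕ}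
    (h : ∀ l < k, W l = W' l) (x : Fin (n 0) → ℝ) : feat φ n W k x = feat φ n W' k x := by
  induction k with
  | zero => rfl
  | succ k ih =>
    funext c
    simp only [feat_succ_apply, preact, ih fun l hl => h l (by omega), h k k.lt_succ_self]

variable (W : ∀ j : ℕ, Fin (n j) → Fin (n (j+1)) → ℝ) (j : ℕ) (a : Fin (n j))
  (b : Fin (n (j+1))) (x : Fin (n 0) → ℝ)

lemma feat_perturb_of_le (t : ℝ) {k : ℕ} (hk : k ≤ j) :
    feat φ n (perturb W j a b t) k x = feat φ n W k x := by
  refine feat_congr (fun l hl => ?_) x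
  exact perturb_of_ne W j a b t (by omega)

lemma hasDerivAt_feat_perturb (hφ : Differentiable ℝ φ) (m : ℕ) (c : Fin (n (j+1+m))) :
    HasDerivAt (fun t => feat φ n (perturb W j a b t) (j+1+m) x c)
      (feat φ n W j x a * backChain φ n W j x m b c) (W j a b) := by
  induction m with
  | zero =>
    have hpre : HasDerivAt (fun t => preact φ n (perturb W j a b t) j x c)
        (if c = b then feat φ n W j x a else 0) (W j a b) := by
      simp only [preact, feat_perturb_of_le W j a b x _ le_rfl]
      exact hasDerivAt_sum_perturb_mul W j a b _ _ c
    refine ((hφ _).hasDerivAt.comp _ hpre).congr_deriv ?_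
    by_cases hc : c = b
    · subst hc; simp [backChain, actD, mul_comm]
    · simp [backChain, hc, Ne.symm hc]
  | succ m ih =>
    have hpre : HasDerivAt (fun t => preact φ n (perturb W j a b t) (j+1+m) x c)
        (∑ l, W (j+1+m) l c * (feat φ n W j x a * backChain φ n W j x m b l))
        (W j a b) := by
      simp only [preact, perturb_of_ne W j a b _ (show j+1+m ≠ j by omega)]
      exact HasDerivAt.fun_sum fun l _ => (ih l).const_mul _
    refine ((hφ _).hasDerivAt.comp _ hpre).congr_deriv ?_
    simp only [perturb_self, backChain, actD, mul_sum]
    exact Finset.sum_congr rfl fun l _ => by ring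

lemma hasDerivAt_outScalar_perturb_of_lt (hφ : Differentiable ℝ φ) {Lm1 : ℕ}
    (hj : j < Lm1) :
    HasDerivAt (fun t => outScalar φ n Lm1 (perturb W j a b t) x)
      (feat φ n W j x a * gVec φ n W j (Lm1 - (j+1)) x b) (W j a b) := by
  obtain ⟨m, rfl⟩ : ∃ m, Lm1 = j+1+m := ⟨Lm1 - (j+1), by omega⟩
  simp only [outScalar, perturb_of_ne W j a b _ (show j+1+m ≠ j by omega)]
  refine (HasDerivAt.fun_sum fun r _ => HasDerivAt.fun_sum fun l _ =>
    (hasDerivAt_feat_perturb W j a b x hφ m l).const_mul (W (j+1+m) l r)).congr_deriv ?_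
  rw [Nat.add_sub_cancel_left, gVec, Finset.sum_comm, mul_sum]
  refine Finset.sum_congr rfl fun l _ => ?_
  rw [mul_sum]
  exact Finset.sum_congr rfl fun r _ => by ring

lemma hasDerivAt_outScalar_perturb_self :
    HasDerivAt (fun t => outScalar φ n j (perturb W j a b t) x) (feat φ n W j x a)
      (W j a b) := by
  simp only [outScalar, feat_perturb_of_le W j a b x _ le_rfl]
  refine (HasDerivAt.fun_sum fun r _ =>
    hasDerivAt_sum_perturb_mul W j a b (feat φ n W j x) _ r).congr_deriv ?_
  simp

end FeatureDerivative

section NTK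

variable {φ : ℝ → ℝ} {n : ℕ → ℕ} {Lm1 : ℕ}
  (ω : ∀ j : Fin (Lm1+1), Fin (n j) → Fin (n (j+1)) → ℝ)

lemma pDeriv_castSucc (hφ : Differentiable ℝ φ) (j : Fin Lm1) (a : Fin (n j))
    (b : Fin (n (j+1))) (x : Fin (n 0) → ℝ) :
    pDeriv φ n Lm1 ω j.castSucc a b x
      = feat φ n (extendW (Lm1+1) n ω) j x a
        * gVec φ n (extendW (Lm1+1) n ω) j (Lm1 - (j+1)) x b := by
  rw [pDeriv_eq_deriv_perturb, ← extendW_apply (Lm1+1) n ω j.castSucc]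
  exact (hasDerivAt_outScalar_perturb_of_lt _ j a b x hφ j.isLt).deriv

lemma pDeriv_last (a : Fin (n Lm1)) (b : Fin (n (Lm1+1))) (x : Fin (n 0) → ℝ) :
    pDeriv φ n Lm1 ω (Fin.last Lm1) a b x = feat φ n (extendW (Lm1+1) n ω) Lm1 x a := by
  rw [pDeriv_eq_deriv_perturb, ← extendW_apply (Lm1+1) n ω (Fin.last Lm1)]
  exact (hasDerivAt_outScalar_perturb_self _ Lm1 a b x).deriv

variable (φ) {N : ℕ} (X : Fin N → (Fin (n 0) → ℝ))

/-- The contribution `J_j J_jᵀ` of the weights of layer `j` to the NTK. -/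
def ntkBlock (j : Fin (Lm1+1)) : Fin N → Fin N → ℝ :=
  fun i i' => ∑ a, ∑ b, pDeriv φ n Lm1 ω j a b (X i) * pDeriv φ n Lm1 ω j a b (X i')

lemma quadForm_ntkMat (v : Fin N → ℝ) :
    quadForm (ntkMat φ n Lm1 ω X) v = ∑ j, quadForm (ntkBlock φ ω X j) v :=
  quadForm_sum _ _ v

lemma ntkBlock_castSucc (hφ : Differentiable ℝ φ) (j : Fin Lm1) :
    ntkBlock φ ω X j.castSucc = fun i i' =>
      featGram φ n (extendW (Lm1+1) n ω) j X i i'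
        * ∑ q, gVec φ n (extendW (Lm1+1) n ω) j (Lm1 - (j+1)) (X i) q
            * gVec φ n (extendW (Lm1+1) n ω) j (Lm1 - (j+1)) (X i') q := by
  funext i i'
  simp only [ntkBlock, pDeriv_castSucc ω hφ, featGram, sum_mul_sum]
  exact Finset.sum_congr rfl fun a _ => Finset.sum_congr rfl fun b _ => by ring

lemma ntkBlock_last (hnL : n (Lm1+1) = 1) :
    ntkBlock φ ω X (Fin.last Lm1) = featGram φ n (extendW (Lm1+1) n ω) Lm1 X := by
  funext i i'
  simp [ntkBlock, pDeriv_last, featGram, hnL]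

end NTK

lemma gGram_of_lt (φ : ℝ → ℝ) (n : ℕ → ℕ) (W : ∀ j : ℕ, Fin (n j) → Fin (n (j+1)) → ℝ)
    {Lm1 N : ℕ} (X : Fin N → (Fin (n 0) → ℝ)) {a : ℕ} (ha : a < Lm1) (i i' : Fin N) :
    gGram φ n W Lm1 X a i i'
      = ∑ q, gVec φ n W a (Lm1 - (a+1)) (X i) q * gVec φ n W a (Lm1 - (a+1)) (X i') q :=
  if_pos ha

lemma gGram_self (φ : ℝ → ℝ) (n : ℕ → ℕ) (W : ∀ j : ℕ, Fin (n j) → Fin (n (j+1)) → ℝ)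
    {Lm1 N : ℕ} (hnL : n (Lm1+1) = 1) (X : Fin N → (Fin (n 0) → ℝ)) (i i' : Fin N) :
    gGram φ n W Lm1 X Lm1 i i' = (N : ℝ)⁻¹ := by
  simp [gGram, hnL, ← sq]

/-- Lower bound for the NTK spectrum: for a depth-L network (L = Lm1+1, output width 1)
with differentiable activation φ,
λ_min(J Jᵀ) ≥ Σ_{k=0}^{L−1} λ_min(F_k F_kᵀ) · min_{i∈[N]} ‖(G_{k+1})_{i:}‖₂². -/
theorem stmt17
    (Lm1 : ℕ) (φ : ℝ → ℝ) (hφ : Differentiable ℝ φ)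
    (n : ℕ → ℕ) (hnL : n (Lm1+1) = 1)
    (N : ℕ) (hN : 0 < N) (X : Fin N → (Fin (n 0) → ℝ))
    (ω : ∀ j : Fin (Lm1+1), Fin (n j) → Fin (n (j+1)) → ℝ) :
    ∑ a ∈ Finset.range (Lm1+1),
        lamMin (featGram φ n (extendW (Lm1+1) n ω) a X) *
        (⨅ i : Fin N, gGram φ n (extendW (Lm1+1) n ω) Lm1 X a i i)
      ≤ lamMin (ntkMat φ n Lm1 ω X) := by
  set W := extendW (Lm1+1) n ω
  have hF : ∀ k w, 0 ≤ quadForm (featGram φ n W k X) w := fun k => quadForm_gram_nonneg _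
  refine le_lamMin hN fun v hv => ?_
  rw [quadForm_ntkMat, Fin.sum_univ_castSucc, sum_range_succ, ← Fin.sum_univ_eq_sum_range]
  refine add_le_add (sum_le_sum fun j _ => ?_) ?_
  · simp only [gGram_of_lt φ n W X j.isLt, ntkBlock_castSucc φ ω X hφ]
    exact lamMin_mul_iInf_le_quadForm_hadamard (hF j) _ hv
  · have : Nonempty (Fin N) := ⟨⟨0, hN⟩⟩
    simp only [gGram_self φ n W hnL, ciInf_const, ntkBlock_last φ ω X hnL]
    calc lamMin (featGram φ n W Lm1 X) * (N : ℝ)⁻¹ ≤ lamMin (featGram φ n W Lm1 X) :=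
          mul_le_of_le_one_right (lamMin_nonneg (hF Lm1))
            (inv_le_one_of_one_le₀ (by exact_mod_cast hN))
      _ ≤ quadForm (featGram φ n W Lm1 X) v := lamMin_le_quadForm (hF Lm1) hv

end
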